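/- Let α > 0, 0 < β < α/3, M > 0 be reals. Then for every (j,k) ∈ ℤ²: Ls_jk ⊆ L_jk, Rs_jk ⊆ R_jk, and R_jk ∩ L_jk = R_jk ∩ Ls_jk = Rs_jk ∩ L_jk. -/

import Mathlib

open Set

/-- The wedge `W(a_l, a_r, M) = {(x,t) : t ≥ 0, a_l t ≤ x ≤ M + a_r t}` as a subset of `ℝ²`. -/
def wedge (al ar M : ℝ) : Set (ℝ × ℝ) :=
  {p | 0 ≤ p.2 ∧ al * p.2 ≤ p.1 ∧ p.1 ≤ M + ar * p.2}

/-- Translate a subset of `ℝ²` by a vector. -/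
def shiftSet (v : ℝ × ℝ) (S : Set (ℝ × ℝ)) : Set (ℝ × ℝ) :=
  (fun p => v + p) '' S

/-- The large left parallelogram `L00`. -/
def bigL (α β M : ℝ) : Set (ℝ × ℝ) :=
  {p | 0 ≤ p.2 ∧ p.2 ≤ M * (1 + β / α) ∧
    M * β / 2 ≤ p.1 + α * p.2 ∧ p.1 + α * p.2 ≤ 3 * M * β / 2}

/-- The large right parallelogram `R00`. -/
def bigR (α β M : ℝ) : Set (ℝ × ℝ) :=
  {p | 0 ≤ p.2 ∧ p.2 ≤ M * (1 + β / α) ∧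
    -(3 * M * β / 2) ≤ p.1 - α * p.2 ∧ p.1 - α * p.2 ≤ -(M * β / 2)}

/-- The small left parallelogram `L00small`. -/
def smallL (α β M : ℝ) : Set (ℝ × ℝ) :=
  {p | 0 ≤ p.2 ∧ p.2 ≤ 3 * M * β / (2 * α) ∧
    M * β / 2 ≤ p.1 + α * p.2 ∧ p.1 + α * p.2 ≤ 3 * M * β / 2}

/-- The small right parallelogram `R00small`. -/
def smallR (α β M : ℝ) : Set (ℝ × ℝ) :=
  {p | 0 ≤ p.2 ∧ p.2 ≤ 3 * M * β / (2 * α) ∧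
    -(3 * M * β / 2) ≤ p.1 - α * p.2 ∧ p.1 - α * p.2 ≤ -(M * β / 2)}

/-- The translation vector `v_jk = (M j (α−β), M k)`. -/
def vjk (α β M : ℝ) (j k : ℤ) : ℝ × ℝ := (M * (j : ℝ) * (α - β), M * (k : ℝ))

def Ljk (α β M : ℝ) (j k : ℤ) : Set (ℝ × ℝ) := shiftSet (vjk α β M j k) (bigL α β M)
def Rjk (α β M : ℝ) (j k : ℤ) : Set (ℝ × ℝ) := shiftSet (vjk α β M j k) (bigR α β M)
def Lsjk (α β M : ℝ) (j k : ℤ) : Set (ℝ × ℝ) := shiftSet (vjk α β M j k) (smallL α β M)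
def Rsjk (α β M : ℝ) (j k : ℤ) : Set (ℝ × ℝ) := shiftSet (vjk α β M j k) (smallR α β M)

/-- The region `Y00` built from `ℓ` big right parallelograms with small left connectors and
two branches of big left parallelograms with small right connectors. -/
def Y00 (α β M : ℝ) (ℓ d : ℤ) : Set (ℝ × ℝ) :=
  bigR α β M ∪
  (⋃ i ∈ Finset.Icc (1 : ℤ) ℓ, (Rjk α β M i i ∪ Lsjk α β M i i)) ∪
  Ljk α β M ℓ ℓ ∪
  (if 1 ≤ d then Ljk α β M (ℓ + 1) (ℓ + 1) else ∅) ∪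
  (if d = 1 then Ljk α β M (ℓ - 1) (ℓ + 1) ∪ Rsjk α β M (ℓ - 1) (ℓ + 1) else ∅) ∪
  (if 2 ≤ d then
    (⋃ i ∈ Finset.Ico (0 : ℤ) d,
      (Ljk α β M (ℓ - i) (ℓ + i) ∪ Rsjk α β M (ℓ - i) (ℓ + i) ∪
        Ljk α β M (ℓ + 1 - i) (ℓ + 1 + i) ∪ Rsjk α β M (ℓ + 1 - i) (ℓ + 1 + i))) ∪
    Ljk α β M (ℓ - d) (ℓ + d) ∪ Rsjk α β M (ℓ - d) (ℓ + d)
  else ∅)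

/-- The shiftSet `Y_jk` of `Y00`. -/
def Yjk (α β M : ℝ) (ℓ d j k : ℤ) : Set (ℝ × ℝ) :=
  shiftSet (M * ((k * (ℓ - d) + j : ℤ) : ℝ) * (α - β), M * (k : ℝ) * ((ℓ + d + 1 : ℤ) : ℝ))
    (Y00 α β M ℓ d)

/-- The full region `Y(ℓ,d,M) = ⋃_{(j,k) ∈ 𝕃, −k ≤ j ≤ k} Y_jk`. -/
def Yreg (α β M : ℝ) (ℓ d : ℤ) : Set (ℝ × ℝ) :=
  ⋃ (j : ℤ) (k : ℤ) (_ : 0 ≤ k ∧ Even (j + k) ∧ -k ≤ j ∧ j ≤ k), Yjk α β M ℓ d j k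

/-! Subtracting `x + αt ≤ 3Mβ/2` from `x − αt ≥ −3Mβ/2` gives `2αt ≤ 3Mβ` on `R00 ∩ L00`, so this
intersection already lies below the height of the small parallelograms. Translation by `v_jk`
commutes with intersections, so the case `j = k = 0` suffices. -/

theorem shiftSet_mono (v : ℝ × ℝ) {S T : Set (ℝ × ℝ)} (h : S ⊆ T) :
    shiftSet v S ⊆ shiftSet v T :=
  image_mono h

theorem shiftSet_inter (v : ℝ × ℝ) (S T : Set (ℝ × ℝ)) :
    shiftSet v S ∩ shiftSet v T = shiftSet v (S ∩ T) :=
  (image_inter (add_right_injective v)).symm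

section Parallelograms

variable {α β M : ℝ}

theorem smallHeight_le_bigHeight (hα : 0 < α) (hM : 0 ≤ M) (hβ : β ≤ 2 * α) :
    3 * M * β / (2 * α) ≤ M * (1 + β / α) := by
  rw [div_le_iff₀ (by positivity), show M * (1 + β / α) * (2 * α) = M * (2 * α + 2 * β) by
    field_simp]
  linarith [mul_nonneg hM (sub_nonneg.2 hβ)]

theorem smallL_subset_bigL (hα : 0 < α) (hM : 0 ≤ M) (hβ : β ≤ 2 * α) :
    smallL α β M ⊆ bigL α β M :=
  fun _ ⟨ht0, ht, hx⟩ => ⟨ht0, ht.trans (smallHeight_le_bigHeight hα hM hβ), hx⟩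

theorem smallR_subset_bigR (hα : 0 < α) (hM : 0 ≤ M) (hβ : β ≤ 2 * α) :
    smallR α β M ⊆ bigR α β M :=
  fun _ ⟨ht0, ht, hx⟩ => ⟨ht0, ht.trans (smallHeight_le_bigHeight hα hM hβ), hx⟩

theorem snd_le_of_mem_bigR_of_mem_bigL (hα : 0 < α) {p : ℝ × ℝ} (hR : p ∈ bigR α β M)
    (hL : p ∈ bigL α β M) : p.2 ≤ 3 * M * β / (2 * α) := by
  rw [le_div_iff₀ (by positivity)]
  linarith [hR.2.2.1, hL.2.2.2]

theorem bigR_inter_bigL_eq_bigR_inter_smallL (hα : 0 < α) :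
    bigR α β M ∩ bigL α β M = bigR α β M ∩ smallL α β M := by
  ext p
  constructor
  · rintro ⟨hR, hL⟩
    exact ⟨hR, hL.1, snd_le_of_mem_bigR_of_mem_bigL hα hR hL, hL.2.2⟩
  · rintro ⟨hR, ht0, -, hx⟩
    exact ⟨hR, ht0, hR.2.1, hx⟩

theorem bigR_inter_bigL_eq_smallR_inter_bigL (hα : 0 < α) :
    bigR α β M ∩ bigL α β M = smallR α β M ∩ bigL α β M := by
  ext p
  constructor
  · rintro ⟨hR, hL⟩
    exact ⟨⟨hR.1, snd_le_of_mem_bigR_of_mem_bigL hα hR hL, hR.2.2⟩, hL⟩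
  · rintro ⟨⟨ht0, -, hx⟩, hL⟩
    exact ⟨⟨ht0, hL.2.1, hx⟩, hL⟩

end Parallelograms

theorem parallelogram_intersections_general (α β M : ℝ) (hα : 0 < α) (hβ : β < α / 3)
    (hM : 0 < M) :
    ∀ j k : ℤ,
      Lsjk α β M j k ⊆ Ljk α β M j k ∧
      Rsjk α β M j k ⊆ Rjk α β M j k ∧
      Rjk α β M j k ∩ Ljk α β M j k = Rjk α β M j k ∩ Lsjk α β M j k ∧
      Rjk α β M j k ∩ Ljk α β M j k = Rsjk α β M j k ∩ Ljk α β M j k := by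
  have hβ' : β ≤ 2 * α := by linarith
  intro j k
  refine ⟨shiftSet_mono _ (smallL_subset_bigL hα hM.le hβ'),
    shiftSet_mono _ (smallR_subset_bigR hα hM.le hβ'), ?_, ?_⟩
  · rw [Rjk, Ljk, Lsjk, shiftSet_inter, shiftSet_inter, bigR_inter_bigL_eq_bigR_inter_smallL hα]
  · rw [Rjk, Ljk, Rsjk, shiftSet_inter, shiftSet_inter, bigR_inter_bigL_eq_smallR_inter_bigL hα]

/-- The small parallelograms sit inside the large ones, and the three pairwise intersections
`R_jk ∩ L_jk`, `R_jk ∩ Ls_jk`, `Rs_jk ∩ L_jk` coincide. -/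
theorem parallelogram_intersections (α β M : ℝ) (hα : 0 < α) (hβ0 : 0 < β) (hβ : β < α / 3)
    (hM : 0 < M) :
    ∀ j k : ℤ,
      Lsjk α β M j k ⊆ Ljk α β M j k ∧
      Rsjk α β M j k ⊆ Rjk α β M j k ∧
      Rjk α β M j k ∩ Ljk α β M j k = Rjk α β M j k ∩ Lsjk α β M j k ∧
      Rjk α β M j k ∩ Ljk α β M j k = Rsjk α β M j k ∩ Ljk α β M j k :=
  parallelogram_intersections_general α β M hα hβ hM
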